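/- arXiv:2501.16949 — 2 statements merged into one kernel-verified Lean document; each statement's English description precedes it below -/
import Mathlib

section
/- Let H be a separable Hilbert space, (g_j)_{j∈I} a Bessel sequence in H with bound β, A a bounded operator on H with 1 ∉ σ(A), W a closed subspace with orthogonal projection P_W, and K a finite set. Suppose there is a constant c > 0 such that for all x₀ ∈ H and w ∈ W, the states x_λ = A^{m(λ)} x₀ + (I − A^{m(λ)})(I − A)⁻¹ w (for suitable exponents m(λ) ≥ 0, λ ∈ K) satisfy ‖w‖² ≤ c Σ_{λ∈K} Σ_{j∈I} |⟨x_λ, g_j⟩|². Then, taking x₀ = (I − A)⁻¹ w, one obtains (1/(|K| c)) ‖w‖² ≤ Σ_{j∈I} |⟨w, P_W (I − A*)⁻¹ g_j⟩|² ≤ β ‖(I − A)⁻¹‖² ‖w‖² for all w ∈ W; hence (P_W (I − A*)⁻¹ g_j)_{j∈I} is a frame for W. -/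
/-!
With `B = (I - A)⁻¹` and the initial state `x₀ = B w`, every state
`A^m B w + (I - A^m) B w` equals `B w` whatever the exponent, and
`⟨B w, g j⟩ = ⟨w, P_W B* g j⟩` for `w ∈ W`. The stability estimate then reads
`‖w‖² ≤ |K| c ∑_j |⟨w, P_W B* g j⟩|²`, and the Bessel bound applied to `B w` gives the upper
frame bound.
-/

section

variable {𝕜 E : Type*} [RCLike 𝕜] [NormedAddCommGroup E] [InnerProductSpace 𝕜 E]

lemma ContinuousLinearMap.apply_comp_add_id_sub_comp_apply (T B : E →L[𝕜] E) (x : E) :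
    T (B x) + ((ContinuousLinearMap.id 𝕜 E - T).comp B) x = B x := by
  simp

lemma Submodule.inner_orthogonalProjectionOnto_adjoint_apply [CompleteSpace E]
    (W : Submodule 𝕜 E) [W.HasOrthogonalProjection] (B : E →L[𝕜] E) (w : W) (f : E) :
    inner 𝕜 w (W.orthogonalProjectionOnto (ContinuousLinearMap.adjoint B f)) =
      inner 𝕜 (B w) f := by
  rw [Submodule.inner_orthogonalProjectionOnto_eq_of_mem_left,
    ContinuousLinearMap.adjoint_inner_right]

lemma tsum_norm_inner_comp_sq_le {I : Type*} (g : I → E) {β : ℝ} (hβ : 0 ≤ β)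
    (hBessel : ∀ f : E, ∑' j, ‖(inner 𝕜 f (g j) : 𝕜)‖ ^ 2 ≤ β * ‖f‖ ^ 2)
    (T : E →L[𝕜] E) (x : E) :
    ∑' j, ‖(inner 𝕜 (T x) (g j) : 𝕜)‖ ^ 2 ≤ β * ‖T‖ ^ 2 * ‖x‖ ^ 2 :=
  calc ∑' j, ‖(inner 𝕜 (T x) (g j) : 𝕜)‖ ^ 2 ≤ β * ‖T x‖ ^ 2 := hBessel (T x)
    _ ≤ β * (‖T‖ * ‖x‖) ^ 2 := by gcongr; exact T.le_opNorm x
    _ = β * ‖T‖ ^ 2 * ‖x‖ ^ 2 := by ring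

end

theorem stmt16_general {H : Type*} [NormedAddCommGroup H] [InnerProductSpace ℂ H]
    [CompleteSpace H]
    {I : Type*} (g : I → H) (β : ℝ) (hβ : 0 < β)
    (hBessel : ∀ f : H, ∑' j, ‖(inner ℂ f (g j) : ℂ)‖ ^ 2 ≤ β * ‖f‖ ^ 2)
    (A : H →L[ℂ] H) (B : H →L[ℂ] H)
    (W : Submodule ℂ H) [CompleteSpace W]
    {K : Type*} [Fintype K] (m : K → ℕ) (c : ℝ) (hc : 0 < c)
    (hmain : ∀ (x₀ : H) (w : W),
      ‖(w : H)‖ ^ 2 ≤ c * ∑ k : K, ∑' j,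
        ‖(inner ℂ ((A ^ m k) x₀ + (((ContinuousLinearMap.id ℂ H) - A ^ m k).comp B) w)
            (g j) : ℂ)‖ ^ 2) :
    ∀ w : W,
      ((Fintype.card K : ℝ) * c)⁻¹ * ‖w‖ ^ 2 ≤
          ∑' j, ‖(inner ℂ w ((W.orthogonalProjectionOnto)
            (ContinuousLinearMap.adjoint B (g j))) : ℂ)‖ ^ 2 ∧
      ∑' j, ‖(inner ℂ w ((W.orthogonalProjectionOnto)
            (ContinuousLinearMap.adjoint B (g j))) : ℂ)‖ ^ 2 ≤
          β * ‖B‖ ^ 2 * ‖w‖ ^ 2 := by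
  intro w
  simp only [W.inner_orthogonalProjectionOnto_adjoint_apply]
  have hstable := hmain (B w) w
  simp only [ContinuousLinearMap.apply_comp_add_id_sub_comp_apply, Finset.sum_const,
    Finset.card_univ, nsmul_eq_mul] at hstable
  refine ⟨inv_mul_le_of_le_mul₀ (by positivity) (tsum_nonneg fun j => by positivity) ?_,
    tsum_norm_inner_comp_sq_le g hβ.le hBessel B w⟩
  simpa only [Submodule.coe_norm, mul_left_comm c, mul_assoc] using hstable

/-- If the source `w ∈ W` satisfies the stability estimate
`‖w‖² ≤ c ∑_{k ∈ K} ∑_j |⟨x_k, g j⟩|²` for the states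
`x_k = A^(m k) x₀ + (I - A^(m k))(I - A)⁻¹ w` (all `x₀ ∈ H`, `w ∈ W`), then taking
`x₀ = (I - A)⁻¹ w` yields the frame inequalities
`(|K| c)⁻¹ ‖w‖² ≤ ∑_j |⟨w, P_W (I - A*)⁻¹ g j⟩|² ≤ β ‖(I - A)⁻¹‖² ‖w‖²` for all
`w ∈ W`, so `(P_W (I - A*)⁻¹ g j)_j` is a frame for `W`. -/
theorem stmt16 {H : Type*} [NormedAddCommGroup H] [InnerProductSpace ℂ H]
    [CompleteSpace H] [TopologicalSpace.SeparableSpace H]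
    {I : Type*} [Countable I] (g : I → H) (β : ℝ) (hβ : 0 < β)
    (hBessel : ∀ f : H, ∑' j, ‖(inner ℂ f (g j) : ℂ)‖ ^ 2 ≤ β * ‖f‖ ^ 2)
    (A : H →L[ℂ] H) (B : H →L[ℂ] H)
    (hB₁ : ((ContinuousLinearMap.id ℂ H) - A).comp B = ContinuousLinearMap.id ℂ H)
    (hB₂ : B.comp ((ContinuousLinearMap.id ℂ H) - A) = ContinuousLinearMap.id ℂ H)
    (W : Submodule ℂ H) [CompleteSpace W]
    {K : Type*} [Fintype K] (m : K → ℕ) (c : ℝ) (hc : 0 < c)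
    (hmain : ∀ (x₀ : H) (w : W),
      ‖(w : H)‖ ^ 2 ≤ c * ∑ k : K, ∑' j,
        ‖(inner ℂ ((A ^ m k) x₀ + (((ContinuousLinearMap.id ℂ H) - A ^ m k).comp B) w)
            (g j) : ℂ)‖ ^ 2) :
    ∀ w : W,
      ((Fintype.card K : ℝ) * c)⁻¹ * ‖w‖ ^ 2 ≤
          ∑' j, ‖(inner ℂ w ((W.orthogonalProjectionOnto)
            (ContinuousLinearMap.adjoint B (g j))) : ℂ)‖ ^ 2 ∧
      ∑' j, ‖(inner ℂ w ((W.orthogonalProjectionOnto)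
            (ContinuousLinearMap.adjoint B (g j))) : ℂ)‖ ^ 2 ≤
          β * ‖B‖ ^ 2 * ‖w‖ ^ 2 :=
  stmt16_general g β hβ hBessel A B W m c hc hmain
end

section
/- Let N ∈ ℕ, N ≥ 1, and let r be an odd integer with 1 ≤ r ≤ 2N − 1 and gcd(r, N) = 1. Define Λ = {0, r/N} + 2ℤ ⊂ ℝ and Ω = [0, 1/2) ∪ [N/2, (N+1)/2) ⊂ ℝ. Then the family { |Ω|^{−1/2} e^{2πiλx} χ_Ω(x) : λ ∈ Λ } is an orthonormal system in L²(Ω); in particular, for distinct λ, μ ∈ Λ, ∫_Ω e^{2πi(λ−μ)x} dx = 0. -/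
/-!
Write `Ω = [0, h) ∪ [t, t + h)` with `h = 1/2`, `t = N/2`. For `c = 2πia ≠ 0`, translating the second
interval gives `∫_Ω e^{cx} dx = (1 + e^{ct}) (e^{ch} - 1) / c = (1 + e^{πiaN}) (e^{πia} - 1) / c`.
A difference `a = λ - μ ≠ 0` of points of `Λ` is either a nonzero even integer, which kills the second
factor, or satisfies `aN = ±r + 2kN`, an odd integer because `r` is odd, which kills the first.
-/

open MeasureTheory Complex Real

lemma integral_cexp_mul_Ico {a b : ℝ} (hab : a ≤ b) {c : ℂ} (hc : c ≠ 0) :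
    ∫ x in Set.Ico a b, cexp (c * x) = (cexp (c * b) - cexp (c * a)) / c := by
  rw [integral_Ico_eq_integral_Ioo, ← integral_Ioc_eq_integral_Ioo,
    ← intervalIntegral.integral_of_le hab]
  exact integral_exp_mul_complex hc

lemma cexp_pi_mul_I_mul_two_mul_int (k : ℤ) : cexp (π * I * (2 * k)) = 1 := by
  rw [← exp_int_mul_two_pi_mul_I k]
  ring_nf

lemma cexp_pi_mul_I_mul_odd {s : ℤ} (hs : Odd s) : cexp (π * I * s) = -1 := by
  obtain ⟨k, rfl⟩ := hs
  rw [show (π : ℂ) * I * ((2 * k + 1 : ℤ) : ℂ) = k * (2 * π * I) + π * I by push_cast; ring,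
    exp_add_pi_mul_I, exp_int_mul_two_pi_mul_I]

section TwoIntervals

variable {h t : ℝ}

lemma disjoint_Ico_zero_Ico_add (ht : h ≤ t) : Disjoint (Set.Ico 0 h) (Set.Ico t (t + h)) :=
  Set.Ico_disjoint_Ico_same.mono_right (Set.Ico_subset_Ico_left ht)

lemma volume_real_Ico_zero_union_Ico_add (hh : 0 ≤ h) (ht : h ≤ t) :
    volume.real (Set.Ico 0 h ∪ Set.Ico t (t + h)) = 2 * h := by
  rw [measureReal_union (disjoint_Ico_zero_Ico_add ht) measurableSet_Ico measure_Ico_lt_top.ne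
      measure_Ico_lt_top.ne,
    Real.volume_real_Ico_of_le hh, Real.volume_real_Ico_of_le (by linarith)]
  ring

lemma integral_cexp_mul_Ico_zero_union_Ico_add (hh : 0 ≤ h) (ht : h ≤ t) {c : ℂ} (hc : c ≠ 0) :
    ∫ x in Set.Ico 0 h ∪ Set.Ico t (t + h), cexp (c * x) =
      (1 + cexp (c * t)) * (cexp (c * h) - 1) / c := by
  have hint (a b : ℝ) : IntegrableOn (fun x : ℝ => cexp (c * x)) (Set.Ico a b) :=
    (by fun_prop : Continuous fun x : ℝ => cexp (c * x)).integrableOn_Icc.mono_set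
      Set.Ico_subset_Icc_self
  rw [setIntegral_union (disjoint_Ico_zero_Ico_add ht) measurableSet_Ico (hint _ _) (hint _ _),
    integral_cexp_mul_Ico hh hc, integral_cexp_mul_Ico (by linarith) hc, ofReal_zero, mul_zero, Complex.exp_zero, ofReal_add, mul_add, Complex.exp_add]
  ring

end TwoIntervals

lemma integral_cexp_two_pi_mul_I_Ico_union_Ico_eq_zero {N : ℕ} (hN : 1 ≤ N) {a : ℝ}
    (ha : (∃ k : ℤ, k ≠ 0 ∧ a = 2 * k) ∨ ∃ s : ℤ, Odd s ∧ a * N = s) :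
    ∫ x in Set.Ico (0 : ℝ) (1 / 2) ∪ Set.Ico ((N : ℝ) / 2) ((N : ℝ) / 2 + 1 / 2),
      cexp (2 * π * I * a * x) = 0 := by
  have ha0 : a ≠ 0 := by
    rintro rfl
    rcases ha with ⟨k, hk, hak⟩ | ⟨s, hs, has⟩
    · exact hk (by exact_mod_cast (mul_eq_zero.mp hak.symm).resolve_left two_ne_zero)
    · obtain rfl : s = 0 := by exact_mod_cast has.symm.trans (zero_mul _)
      simp at hs
  have hN' : (1 : ℝ) / 2 ≤ N / 2 := by gcongr; exact_mod_cast hN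
  rw [integral_cexp_mul_Ico_zero_union_Ico_add (by norm_num) hN' (by simp [ha0, pi_ne_zero]),
    show 2 * π * I * a * ((N / 2 : ℝ) : ℂ) = π * I * (a * N : ℝ) by push_cast; ring,
    show 2 * π * I * a * ((1 / 2 : ℝ) : ℂ) = π * I * a by push_cast; ring]
  rcases ha with ⟨k, -, hak⟩ | ⟨s, hs, has⟩
  · have hexp : cexp (π * I * a) = 1 := by
      rw [hak]
      push_cast
      exact cexp_pi_mul_I_mul_two_mul_int k
    rw [hexp]
    simp
  · rw [has, ofReal_intCast, cexp_pi_mul_I_mul_odd hs]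
    simp

lemma sub_eq_two_mul_int_or_odd {N : ℕ} (hN : N ≠ 0) {r : ℤ} (hr : Odd r) {l m : ℝ}
    (hl : ∃ n : ℤ, l = 2 * n ∨ l = (r : ℝ) / N + 2 * n)
    (hm : ∃ n : ℤ, m = 2 * n ∨ m = (r : ℝ) / N + 2 * n) (hlm : l ≠ m) :
    (∃ k : ℤ, k ≠ 0 ∧ l - m = 2 * k) ∨ ∃ s : ℤ, Odd s ∧ (l - m) * N = s := by
  have hNR : (N : ℝ) ≠ 0 := by exact_mod_cast hN
  obtain ⟨n, rfl | rfl⟩ := hl <;> obtain ⟨k, rfl | rfl⟩ := hm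
  · refine .inl ⟨n - k, fun h => hlm ?_, by push_cast; ring⟩
    rw [sub_eq_zero.mp h]
  · exact .inr ⟨2 * ((n - k) * N) - r, (even_two_mul _).sub_odd hr, by push_cast; field_simp; ring⟩
  · exact .inr ⟨r + 2 * ((n - k) * N), hr.add_even (even_two_mul _), by push_cast; field_simp; ring⟩
  · refine .inl ⟨n - k, fun h => hlm ?_, by push_cast; ring⟩
    rw [sub_eq_zero.mp h]

theorem stmt19_general (N : ℕ) (hN : 1 ≤ N) (r : ℤ) (hodd : Odd r) :
    let Λ : Set ℝ := {x | ∃ n : ℤ, x = 2 * n ∨ x = (r : ℝ) / N + 2 * n}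
    let Ω : Set ℝ := Set.Ico (0 : ℝ) (1 / 2) ∪ Set.Ico ((N : ℝ) / 2) (((N : ℝ) + 1) / 2)
    (∀ l ∈ Λ,
      (∫ x in Ω, ‖Complex.exp (2 * (Real.pi : ℂ) * Complex.I * (l : ℂ) * (x : ℂ))‖ ^ 2) = 1) ∧
    (∀ l ∈ Λ, ∀ m ∈ Λ, l ≠ m →
      (∫ x in Ω, Complex.exp (2 * (Real.pi : ℂ) * Complex.I * ((l : ℂ) - (m : ℂ)) * (x : ℂ))) = 0) := by
  intro Λ Ω
  have hΩ : Ω = Set.Ico 0 (1 / 2) ∪ Set.Ico ((N : ℝ) / 2) ((N : ℝ) / 2 + 1 / 2) := by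
    rw [← add_div]
  have hN' : (1 : ℝ) / 2 ≤ N / 2 := by gcongr; exact_mod_cast hN
  refine ⟨fun l _ => ?_, fun l hl m hm hlm => ?_⟩
  · have hnorm (x : ℝ) : ‖cexp (2 * π * I * l * x)‖ ^ 2 = 1 := by simp [norm_exp]
    simp_rw [hnorm, setIntegral_const, hΩ,
      volume_real_Ico_zero_union_Ico_add (by norm_num : (0 : ℝ) ≤ 1 / 2) hN']
    norm_num
  · rw [hΩ, ← ofReal_sub]
    exact integral_cexp_two_pi_mul_I_Ico_union_Ico_eq_zero hN
      (sub_eq_two_mul_int_or_odd (by omega) hodd hl hm hlm)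

/-- For the spectral pair `(Ω, Λ)` with `Λ = {0, r/N} + 2ℤ` and
`Ω = [0, 1/2) ∪ [N/2, (N+1)/2)`, the exponentials `e^{2πiλx}`, `λ ∈ Λ`, form an
orthonormal system in `L²(Ω)`: each has norm one (`|Ω| = 1`), and for distinct
`λ, μ ∈ Λ` the integral `∫_Ω e^{2πi(λ-μ)x} dx` vanishes. -/
theorem stmt19 (N : ℕ) (hN : 1 ≤ N) (r : ℤ) (hodd : Odd r) (hr1 : 1 ≤ r)
    (hr2 : r ≤ 2 * (N : ℤ) - 1) (hcop : Int.gcd r N = 1) :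
    let Λ : Set ℝ := {x | ∃ n : ℤ, x = 2 * n ∨ x = (r : ℝ) / N + 2 * n}
    let Ω : Set ℝ := Set.Ico (0 : ℝ) (1 / 2) ∪ Set.Ico ((N : ℝ) / 2) (((N : ℝ) + 1) / 2)
    (∀ l ∈ Λ,
      (∫ x in Ω, ‖Complex.exp (2 * (Real.pi : ℂ) * Complex.I * (l : ℂ) * (x : ℂ))‖ ^ 2) = 1) ∧
    (∀ l ∈ Λ, ∀ m ∈ Λ, l ≠ m →
      (∫ x in Ω, Complex.exp (2 * (Real.pi : ℂ) * Complex.I * ((l : ℂ) - (m : ℂ)) * (x : ℂ))) = 0) :=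
  stmt19_general N hN r hodd
end
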